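/- Let k ≥ 4. Let a and b be distinct vertices of the circular clique G_{2k−1,2} that are not adjacent in G_{2k−1,2}. Let L be a list assignment on the vertices of the complete graph on k − 1 vertices such that every list L(v) equals either N(a) or N(b), the neighbourhood in G_{2k−1,2} of a or of b respectively, and both lists occur. Then there is a map f from the vertices to ZMod(2k−1) with f(v) ∈ L(v) for every vertex v and with f(u) adjacent to f(v) in G_{2k−1,2} for all distinct vertices u, v. -/

import Mathlib

open SimpleGraph

/-- The circular clique `G_{p,q}` on vertex set `ZMod p`. -/
def circClique (p q : ℕ) : SimpleGraph (ZMod p) where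
  Adj i j := i ≠ j ∧ (q ≤ (i - j).val ∧ (i - j).val ≤ p - q)
    ∧ (q ≤ (j - i).val ∧ (j - i).val ≤ p - q)
  symm := ⟨fun _ _ ⟨h, h1, h2⟩ => ⟨h.symm, h2, h1⟩⟩
  loopless := ⟨fun _ h => h.1 rfl⟩

/-- `G` admits a `(p,q)`-circular colouring. -/
def HasCircColoring {V : Type*} (G : SimpleGraph V) (p q : ℕ) : Prop :=
  Nonempty (G →g circClique p q)

/-- A graph is 4-critical. -/
def FourCritical {V : Type*} (G : SimpleGraph V) : Prop :=
  ¬ G.Colorable 3 ∧ ∀ e ∈ G.edgeSet, (G.deleteEdges {e}).Colorable 3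

/-- The wheel on `n` vertices: a cycle on `n-1` vertices plus a hub. -/
def wheel (n : ℕ) : SimpleGraph (Option (Fin (n - 1))) where
  Adj u v := match u, v with
    | none, none => False
    | none, some _ => True
    | some _, none => True
    | some i, some j => (cycleGraph (n - 1)).Adj i j
  symm := by refine ⟨?_⟩; rintro (_|i) (_|j) h <;> simp_all <;> exact h.symm
  loopless := by refine ⟨?_⟩; rintro (_|i) h <;> simp_all

/-!
Distinct non-adjacent vertices of `G_{2k-1,2}` are consecutive, say `b = a + 1`. The `k - 1`
vertices `a + 2, a + 4, …, a + 2k - 2` form a clique, all of them lie in `N(a)` except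
`a + 2k - 2 = a - 1`, and all lie in `N(a + 1)` except `a + 2`. So a vertex with list `N(a)` gets
`a + 2`, a vertex with list `N(a + 1)` gets `a - 1`, and the others get the remaining colours in
any order.
-/

namespace circClique

variable {p q : ℕ} [NeZero p]

theorem adj_add_natCast (hq : 0 < q) (c : ZMod p) {m : ℕ} (hqm : q ≤ m) (hmp : m ≤ p - q) :
    (circClique p q).Adj c (c + m) := by
  have hval : (m : ZMod p).val = m := ZMod.val_cast_of_lt (by omega)
  have hne : (m : ZMod p) ≠ 0 := fun h => by rw [h, ZMod.val_zero] at hval; omega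
  have hneg : (-(m : ZMod p)).val = p - m := by rw [ZMod.neg_val, if_neg hne, hval]
  refine ⟨fun h => hne (by simpa using h.symm), ?_, ?_⟩
  · rw [sub_add_cancel_left, hneg]; omega
  · rw [add_sub_cancel_left, hval]; omega

theorem adj_add_mul_natCast (hq : 0 < q) (c : ZMod p) {n i j : ℕ} (hn : q * n ≤ p)
    (hi : i < n) (hj : j < n) (hij : i ≠ j) :
    (circClique p q).Adj (c + (q * i : ℕ)) (c + (q * j : ℕ)) := by
  wlog hlt : i < j generalizing i j
  · exact (this hj hi hij.symm (by omega)).symm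
  have hsplit : c + (q * j : ℕ) = c + (q * i : ℕ) + (q * (j - i) : ℕ) := by
    rw [add_assoc, ← Nat.cast_add, ← Nat.mul_add, Nat.add_sub_cancel' hlt.le]
  have hgap : q * (j - i) + q ≤ q * n := by
    rw [← Nat.mul_succ]; exact Nat.mul_le_mul_left _ (by omega)
  rw [hsplit]
  exact adj_add_natCast hq _ (Nat.le_mul_of_pos_right q (by omega)) (by omega)

theorem neighborSet_ne_add_one (hq : 0 < q) (hqp : 2 * q ≤ p) (c : ZMod p) :
    (circClique p q).neighborSet c ≠ (circClique p q).neighborSet (c + 1) := by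
  intro h
  have hmem : c + (q : ℕ) ∈ (circClique p q).neighborSet c :=
    adj_add_natCast hq c le_rfl (by omega)
  rw [h, mem_neighborSet] at hmem
  have hdiff : c + (q : ℕ) - (c + 1) = ((q - 1 : ℕ) : ZMod p) := by
    push_cast [Nat.cast_sub hq]; ring
  have hval := hmem.2.2.1
  rw [hdiff, ZMod.val_cast_of_lt (by omega)] at hval
  omega

theorem eq_add_one_or_eq_add_one_of_not_adj {a b : ZMod p} (hab : a ≠ b)
    (h : ¬ (circClique p 2).Adj a b) : b = a + 1 ∨ a = b + 1 := by
  set d := (b - a).val with hd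
  have hb : b = a + d := by rw [hd, ZMod.natCast_zmod_val]; ring
  have hd0 : d ≠ 0 := fun h0 => hab (by rw [hb, h0, Nat.cast_zero, add_zero])
  have hdp : d < p := ZMod.val_lt _
  have hd1 : d = 1 ∨ d = p - 1 := by
    by_contra! hmid
    exact h (hb ▸ adj_add_natCast two_pos a (by omega) (by omega))
  rcases hd1 with hd1 | hd1
  · left; rw [hb, hd1, Nat.cast_one]
  · right
    rw [hb, hd1, Nat.cast_sub (by omega), Nat.cast_one, add_assoc, sub_add_cancel,
      ZMod.natCast_self, add_zero]

end circClique

theorem exists_complete_listColoring_neighborSet_add_one (k : ℕ) (hk : 3 ≤ k)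
    (a : ZMod (2 * k - 1)) (L : Fin (k - 1) → Set (ZMod (2 * k - 1)))
    (hL : ∀ v, L v = (circClique (2 * k - 1) 2).neighborSet a ∨
      L v = (circClique (2 * k - 1) 2).neighborSet (a + 1))
    (ha : ∃ v, L v = (circClique (2 * k - 1) 2).neighborSet a)
    (hb : ∃ v, L v = (circClique (2 * k - 1) 2).neighborSet (a + 1)) :
    ∃ f : Fin (k - 1) → ZMod (2 * k - 1), (∀ v, f v ∈ L v) ∧
      ∀ u v, u ≠ v → (circClique (2 * k - 1) 2).Adj (f u) (f v) := by
  have : NeZero (2 * k - 1) := ⟨by omega⟩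
  have hN := circClique.neighborSet_ne_add_one (p := 2 * k - 1) two_pos (by omega) a
  obtain ⟨va, hva⟩ := ha
  obtain ⟨vb, hvb⟩ := hb
  have hvab : va ≠ vb := fun h => hN (by rw [← hva, h, hvb])
  have hfirst_last : (⟨0, by omega⟩ : Fin (k - 1)) ≠ ⟨k - 2, by omega⟩ := by
    simp only [ne_eq, Fin.mk.injEq]; omega
  obtain ⟨σ, hσa, hσb⟩ := MulAction.is_two_pretransitive_iff.mp
    (Equiv.Perm.isMultiplyPretransitive _ 2) hvab hfirst_last
  rw [Equiv.Perm.smul_def] at hσa hσb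
  have hfirst : ∀ v, (σ v : ℕ) = 0 → v = va := fun v h => σ.injective (hσa ▸ Fin.ext h)
  have hlast : ∀ v, (σ v : ℕ) = k - 2 → v = vb :=
    fun v h => σ.injective (hσb ▸ Fin.ext h)
  refine ⟨fun v => a + 2 + ((2 * σ v : ℕ) : ZMod (2 * k - 1)), fun v => ?_,
    fun u v huv => ?_⟩
  · have hσv := (σ v).isLt
    rcases hL v with h | h <;> simp only [h, mem_neighborSet]
    · have hne : (σ v : ℕ) ≠ k - 2 := fun h' => hN (by rw [← h, hlast v h', hvb])
      have hcolour :
          a + 2 + ((2 * σ v : ℕ) : ZMod (2 * k - 1)) = a + ((2 * σ v + 2 : ℕ)) := by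
        push_cast; ring
      rw [hcolour]
      exact circClique.adj_add_natCast two_pos a (by omega) (by omega)
    · have hne : (σ v : ℕ) ≠ 0 := fun h' => hN (by rw [← hva, ← h, hfirst v h'])
      have hcolour :
          a + 2 + ((2 * σ v : ℕ) : ZMod (2 * k - 1)) = a + 1 + ((2 * σ v + 1 : ℕ)) := by
        push_cast; ring
      rw [hcolour]
      exact circClique.adj_add_natCast two_pos (a + 1) (by omega) (by omega)
  · exact circClique.adj_add_mul_natCast two_pos (a + 2) (n := k - 1) (by omega) (σ u).isLt
      (σ v).isLt (fun h => huv (σ.injective (Fin.ext h)))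

/-- A `(2k-1,2)`-near-uniform list assignment (lists are the neighbourhoods in
`G_{2k-1,2}` of two fixed non-adjacent vertices, both occurring) on `K_{k-1}` admits a
list `(2k-1,2)`-colouring. -/
theorem stmt_9 (k : ℕ) (hk : 4 ≤ k) (a b : ZMod (2 * k - 1)) (hab : a ≠ b)
    (hnadj : ¬ (circClique (2 * k - 1) 2).Adj a b)
    (L : Fin (k - 1) → Set (ZMod (2 * k - 1)))
    (hL : ∀ v, L v = (circClique (2 * k - 1) 2).neighborSet a ∨
      L v = (circClique (2 * k - 1) 2).neighborSet b)
    (ha : ∃ v, L v = (circClique (2 * k - 1) 2).neighborSet a)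
    (hb : ∃ v, L v = (circClique (2 * k - 1) 2).neighborSet b) :
    ∃ f : Fin (k - 1) → ZMod (2 * k - 1), (∀ v, f v ∈ L v) ∧
      ∀ u v, u ≠ v → (circClique (2 * k - 1) 2).Adj (f u) (f v) := by
  have : NeZero (2 * k - 1) := ⟨by omega⟩
  rcases circClique.eq_add_one_or_eq_add_one_of_not_adj hab hnadj with rfl | rfl
  · exact exists_complete_listColoring_neighborSet_add_one k (by omega) a L hL ha hb
  · exact exists_complete_listColoring_neighborSet_add_one k (by omega) b L
      (fun v => (hL v).symm) hb ha
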